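/- Let P0, r0, D0, σ, R > 0. Then there exists N0 = N0(P0,r0,D0,σ,R) > 0 such that the following holds. Let (X,x,G) be a σ-controlled isometric action. Then for every point y ∈ X, the image of the restriction map Stab_G(y) → Isom(B̄(y,R)) has cardinality at most N0. -/

import Mathlib

open Metric Set Pointwise
open scoped ENNReal

noncomputable section

/-- A unit-speed geodesic from `x` to `y`, parametrized on `[0, dist x y]`. -/
def IsGeodesicSeg {X : Type*} [MetricSpace X] (c : ℝ → X) (x y : X) : Prop :=
  c 0 = x ∧ c (dist x y) = y ∧
    ∀ s ∈ Set.Icc (0 : ℝ) (dist x y), ∀ t ∈ Set.Icc (0 : ℝ) (dist x y),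
      dist (c s) (c t) = |s - t|

/-- A geodesic metric space: any two points are joined by a geodesic. -/
def IsGeodesicSpace (X : Type*) [MetricSpace X] : Prop :=
  ∀ x y : X, ∃ c : ℝ → X, IsGeodesicSeg c x y

/-- The comparison point at arclength parameter `s` on the Euclidean segment from `a` to `b`. -/
def cmpPoint (a b : EuclideanSpace ℝ (Fin 2)) (s : ℝ) : EuclideanSpace ℝ (Fin 2) :=
  a + (s / dist a b) • (b - a)

/-- A CAT(0)-space: a geodesic space in which every geodesic triangle is thinner than its
Euclidean comparison triangle. -/
def IsCAT0 (X : Type*) [MetricSpace X] : Prop :=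
  IsGeodesicSpace X ∧
    ∀ (x y z : X) (c₁ c₂ : ℝ → X), IsGeodesicSeg c₁ x y → IsGeodesicSeg c₂ x z →
      ∀ x' y' z' : EuclideanSpace ℝ (Fin 2),
        dist x' y' = dist x y → dist x' z' = dist x z → dist y' z' = dist y z →
          ∀ s ∈ Set.Icc (0 : ℝ) (dist x y), ∀ t ∈ Set.Icc (0 : ℝ) (dist x z),
            dist (c₁ s) (c₂ t) ≤ dist (cmpPoint x' y' s) (cmpPoint x' z' t)

/-- Geodesically complete: every geodesic segment extends to a (full) geodesic line. -/
def GeodesicallyComplete (X : Type*) [MetricSpace X] : Prop :=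
  ∀ (a b : ℝ) (c : ℝ → X),
    (∀ s ∈ Set.Icc a b, ∀ t ∈ Set.Icc a b, dist (c s) (c t) = |s - t|) →
    ∃ l : ℝ → X, Isometry l ∧ ∀ s ∈ Set.Icc a b, l s = c s

/-- `(P₀, r₀)`-packed: every `2r₀`-separated subset of a closed ball of radius `3r₀`
has at most `P₀` elements. -/
def IsPacked (P₀ r₀ : ℝ) (X : Type*) [MetricSpace X] : Prop :=
  ∀ (x : X) (s : Finset X), ↑s ⊆ Metric.closedBall x (3 * r₀) →
    (∀ y ∈ s, ∀ z ∈ s, y ≠ z → 2 * r₀ < dist y z) → (s.card : ℝ) ≤ P₀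

/-- The compact-open topology on the isometry group of a metric space. -/
instance isomTopology (X : Type*) [MetricSpace X] : TopologicalSpace (X ≃ᵢ X) :=
  TopologicalSpace.induced
    (fun g : X ≃ᵢ X => (⟨(g : X → X), g.continuous⟩ : C(X, X))) inferInstance

/-- `G` is `D`-cocompact: `G ⬝ B̄(x, D) = X` for every `x`. -/
def IsDCocompact {X : Type*} [MetricSpace X] (G : Subgroup (X ≃ᵢ X)) (D : ℝ) : Prop :=
  ∀ x y : X, ∃ g ∈ G, dist x (g y) ≤ D

/-- The quotient metric space `G \ X` has diameter at most `D`: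
the infimum `inf_{g ∈ G} d(x, g y)` is `≤ D` for all `x, y`. -/
def QuotDiamLE {X : Type*} [MetricSpace X] (G : Subgroup (X ≃ᵢ X)) (D : ℝ) : Prop :=
  ∀ x y : X, ∀ ε > 0, ∃ g ∈ G, dist x (g y) < D + ε

/-- `G` is cocompact: the quotient `G \ X` is compact; equivalently there is a compact set
whose `G`-translates cover `X`. -/
def IsCocompactAction {X : Type*} [MetricSpace X] (G : Subgroup (X ≃ᵢ X)) : Prop :=
  ∃ K : Set X, IsCompact K ∧ ∀ x : X, ∃ g ∈ G, (g : X ≃ᵢ X) x ∈ K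

/-- A topological group is unimodular if it admits a left and right invariant Haar measure,
i.e. a Borel measure, positive on open sets and finite on compact sets, invariant under all
left and right translations. -/
def IsUnimodularGroup (G : Type*) [Group G] [TopologicalSpace G] : Prop :=
  ∃ μ : @MeasureTheory.Measure G (borel G),
    (∀ K : Set G, IsCompact K → μ K ≠ ⊤) ∧
    (∀ U : Set G, IsOpen U → U.Nonempty → 0 < μ U) ∧
    (∀ (g : G) (A : Set G), μ ((fun h => g * h) '' A) = μ A) ∧
    (∀ (g : G) (A : Set G), μ ((fun h => h * g) '' A) = μ A)

/-- An isometry is elliptic if it has a fixed point (equivalently, the displacement infimum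
is attained and equals `0`). -/
def IsEllipticIso {X : Type*} [MetricSpace X] (g : X ≃ᵢ X) : Prop :=
  ∃ x : X, g x = x

/-- Translation length of an isometry. -/
def translationLength {X : Type*} [MetricSpace X] (g : X ≃ᵢ X) : ℝ :=
  ⨅ x : X, dist x (g x)

/-- An isometry is semisimple if its displacement infimum is attained
(it is then elliptic or hyperbolic). -/
def IsSemisimpleIso {X : Type*} [MetricSpace X] (g : X ≃ᵢ X) : Prop :=
  ∃ x : X, dist x (g x) = translationLength g

/-- The free systole of `G` at `x`: infimum of displacements at `x` of non-elliptic
elements of `G` (`⊤` if there are none). -/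
def freeSystoleAt {X : Type*} [MetricSpace X] (G : Subgroup (X ≃ᵢ X)) (x : X) : ℝ≥0∞ :=
  ⨅ g ∈ {g : X ≃ᵢ X | g ∈ G ∧ ¬ IsEllipticIso g}, edist x (g x)

/-- The free systole of `G`. -/
def freeSystole {X : Type*} [MetricSpace X] (G : Subgroup (X ≃ᵢ X)) : ℝ≥0∞ :=
  ⨅ x : X, freeSystoleAt G x

/-- The free diastole of `G`. -/
def freeDiastole {X : Type*} [MetricSpace X] (G : Subgroup (X ≃ᵢ X)) : ℝ≥0∞ :=
  ⨆ x : X, freeSystoleAt G x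

/-- The open almost stabilizer `G_r(x) = ⟨S_r(x)⟩`. -/
def openAlmostStab {X : Type*} [MetricSpace X] (G : Subgroup (X ≃ᵢ X)) (x : X) (r : ℝ) :
    Subgroup (X ≃ᵢ X) :=
  Subgroup.closure {g : X ≃ᵢ X | g ∈ G ∧ dist x (g x) < r}

/-- The closed almost stabilizer `Ḡ_r(x) = ⟨S̄_r(x)⟩`. -/
def closedAlmostStab {X : Type*} [MetricSpace X] (G : Subgroup (X ≃ᵢ X)) (x : X) (r : ℝ) :
    Subgroup (X ≃ᵢ X) :=
  Subgroup.closure {g : X ≃ᵢ X | g ∈ G ∧ dist x (g x) ≤ r}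

/-- Virtually nilpotent group. -/
def VirtuallyNilpotent (H : Type*) [Group H] : Prop :=
  ∃ K : Subgroup H, K.FiniteIndex ∧ Group.IsNilpotent K

/-- Virtually abelian group. -/
def VirtuallyAbelian (H : Type*) [Group H] : Prop :=
  ∃ K : Subgroup H, K.FiniteIndex ∧ ∀ a ∈ K, ∀ b ∈ K, a * b = b * a

/-- A topological group is almost nilpotent if it contains a compact open normal subgroup `N`
such that the quotient is discrete, finitely generated and virtually nilpotent. -/
def AlmostNilpotent (A : Type*) [Group A] [TopologicalSpace A] : Prop :=
  ∃ (N : Subgroup A) (_ : N.Normal), IsOpen (N : Set A) ∧ IsCompact (N : Set A) ∧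
    DiscreteTopology (A ⧸ N) ∧ Group.FG (A ⧸ N) ∧ VirtuallyNilpotent (A ⧸ N)

/-- A topological group is almost abelian if it contains a compact open normal subgroup `N`
such that the quotient is discrete, finitely generated and virtually abelian. -/
def AlmostAbelian (A : Type*) [Group A] [TopologicalSpace A] : Prop :=
  ∃ (N : Subgroup A) (_ : N.Normal), IsOpen (N : Set A) ∧ IsCompact (N : Set A) ∧
    DiscreteTopology (A ⧸ N) ∧ Group.FG (A ⧸ N) ∧ VirtuallyAbelian (A ⧸ N)

end

/-- A `σ`-controlled isometric action (with structural constants `P₀, r₀, D₀`). -/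
def SigmaControlled (P₀ r₀ D₀ σ : ℝ) (X : Type*) [MetricSpace X] (x : X)
    (G : Subgroup (X ≃ᵢ X)) : Prop :=
  ProperSpace X ∧ GeodesicallyComplete X ∧ IsCAT0 X ∧ IsPacked P₀ r₀ X ∧
    IsClosed (G : Set (X ≃ᵢ X)) ∧ IsTotallyDisconnected (G : Set (X ≃ᵢ X)) ∧
    IsDCocompact G D₀ ∧
    ∀ g ∈ G, dist x (g x) = 0 ∨ σ ≤ dist x (g x)

/-!
The orbit `G x` is `σ`-separated. Packing at scale `r₀` passes to every scale `ρ ≤ r₀` through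
radial expansion (geodesic completeness plus the CAT(0) comparison), so balls of radius
`R + 3D₀` contain uniformly few `ρ`-separated points, hence uniformly few orbit points: call this
finite set `F`. The stabilizer of `y` permutes `F`. If `g, h ∈ Stab_G(y)` agree on `F`, the set
where they agree is closed, geodesically convex and, by cocompactness, `D₀`-dense in
`B̄(y, R + 2D₀)`; in a geodesically complete CAT(0) space such a set contains `B̄(y, R)`. So at
most `|F| ^ |F|` restrictions occur.
-/

open scoped NNReal

lemma EuclideanSpace.dist_fin_two (u v : EuclideanSpace ℝ (Fin 2)) :
    dist u v = √((u 0 - v 0) ^ 2 + (u 1 - v 1) ^ 2) := by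
  simp [EuclideanSpace.dist_eq, Fin.sum_univ_two, Real.dist_eq, sq_abs]

lemma exists_euclidean_triangle {a b c : ℝ} (hab : c ≤ a + b) (hac : b ≤ a + c)
    (hbc : a ≤ b + c) :
    ∃ x y z : EuclideanSpace ℝ (Fin 2), dist x y = a ∧ dist x z = b ∧ dist y z = c := by
  have ha : 0 ≤ a := by linarith
  have hb : 0 ≤ b := by linarith
  have hc : 0 ≤ c := by linarith
  -- the apex `(p, q)` over the base `[0, a]`; for `a = 0` the junk value `p = 0` still works
  set p := (a ^ 2 + b ^ 2 - c ^ 2) / (2 * a)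
  have hp : 2 * a * p = a ^ 2 + b ^ 2 - c ^ 2 := by
    rcases ha.eq_or_lt with rfl | ha
    · simp only [mul_zero, zero_mul]; nlinarith
    · simp only [p]; field_simp
  have hpb : p ^ 2 ≤ b ^ 2 := by
    rcases ha.eq_or_lt with rfl | ha
    · simp only [p, mul_zero, div_zero]
      nlinarith
    · have : (2 * a * p) ^ 2 ≤ (2 * a * b) ^ 2 := by
        rw [hp]
        nlinarith [mul_nonneg (mul_nonneg (sub_nonneg.2 hab) (sub_nonneg.2 hac))
          (mul_nonneg (sub_nonneg.2 hbc) (add_nonneg (add_nonneg ha.le hb) hc))]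
      rw [mul_pow _ p, mul_pow _ b] at this
      exact le_of_mul_le_mul_left this (by positivity)
  have hq := Real.sq_sqrt (sub_nonneg.2 hpb)
  refine ⟨!₂[0, 0], !₂[a, 0], !₂[p, √(b ^ 2 - p ^ 2)], ?_, ?_, ?_⟩ <;>
    simp only [EuclideanSpace.dist_fin_two, Matrix.cons_val_zero, Matrix.cons_val_one]
  · simp [Real.sqrt_sq ha]
  · conv_rhs => rw [← Real.sqrt_sq hb]
    congr 1; nlinarith
  · conv_rhs => rw [← Real.sqrt_sq hc]
    congr 1; nlinarith

lemma cmpPoint_mul_dist (a b : EuclideanSpace ℝ (Fin 2)) (t : ℝ) :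
    cmpPoint a b (t * dist a b) = a + t • (b - a) := by
  rcases eq_or_ne (dist a b) 0 with h | h
  · simp [cmpPoint, dist_eq_zero.1 h]
  · rw [cmpPoint, mul_div_cancel_right₀ _ h]

section Geodesics

variable {X Y : Type*} [MetricSpace X] [MetricSpace Y]

lemma IsGeodesicSeg.comp_isometry {c : ℝ → X} {x y : X} (hc : IsGeodesicSeg c x y) {f : X → Y}
    (hf : Isometry f) : IsGeodesicSeg (f ∘ c) (f x) (f y) := by
  obtain ⟨h₀, h₁, hdist⟩ := hc
  refine ⟨by simp [h₀], by simp [hf.dist_eq, h₁], fun s hs t ht ↦ ?_⟩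
  rw [hf.dist_eq] at hs ht
  simp [hf.dist_eq, hdist s hs t ht]

lemma Isometry.isGeodesicSeg {l : ℝ → X} (hl : Isometry l) {T : ℝ} (hT : 0 ≤ T) :
    IsGeodesicSeg l (l 0) (l T) := by
  have hd : dist (l 0) (l T) = T := by simp [hl.dist_eq, Real.dist_eq, abs_of_nonneg hT]
  exact ⟨rfl, by rw [hd], fun s _ t _ ↦ by rw [hl.dist_eq, Real.dist_eq]⟩

lemma GeodesicallyComplete.exists_isometry (hGC : GeodesicallyComplete X)
    (hX : IsGeodesicSpace X) (p z : X) :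
    ∃ l : ℝ → X, Isometry l ∧ l 0 = p ∧ l (dist p z) = z := by
  obtain ⟨c, hc₀, hc₁, hc⟩ := hX p z
  obtain ⟨l, hl, hlc⟩ := hGC 0 (dist p z) c hc
  exact ⟨l, hl, by rw [hlc 0 ⟨le_rfl, dist_nonneg⟩, hc₀],
    by rw [hlc _ ⟨dist_nonneg, le_rfl⟩, hc₁]⟩

namespace IsCAT0

lemma dist_geodesicSeg_mul_le (hX : IsCAT0 X) {x y z : X} {c₁ c₂ : ℝ → X}
    (h₁ : IsGeodesicSeg c₁ x y) (h₂ : IsGeodesicSeg c₂ x z) {t : ℝ} (ht₀ : 0 ≤ t)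
    (ht₁ : t ≤ 1) :
    dist (c₁ (t * dist x y)) (c₂ (t * dist x z)) ≤ t * dist y z := by
  obtain ⟨x', y', z', hxy, hxz, hyz⟩ := exists_euclidean_triangle
    (dist_triangle_left y z x) (dist_triangle x y z) (dist_triangle_right x y z)
  have hmem {d : ℝ} (hd : 0 ≤ d) : t * d ∈ Icc 0 d :=
    ⟨mul_nonneg ht₀ hd, mul_le_of_le_one_left hd ht₁⟩
  calc dist (c₁ (t * dist x y)) (c₂ (t * dist x z))
      ≤ dist (cmpPoint x' y' (t * dist x y)) (cmpPoint x' z' (t * dist x z)) :=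
        hX.2 x y z c₁ c₂ h₁ h₂ x' y' z' hxy hxz hyz _ (hmem dist_nonneg) _ (hmem dist_nonneg)
    _ = ‖t • (y' - z')‖ := by
        rw [← hxy, ← hxz, cmpPoint_mul_dist, cmpPoint_mul_dist, dist_eq_norm, smul_sub,
          smul_sub, smul_sub]
        congr 1; abel
    _ = t * dist y z := by rw [norm_smul, Real.norm_of_nonneg ht₀, ← dist_eq_norm, hyz]

lemma geodesicSeg_unique (hX : IsCAT0 X) {x y : X} {c c' : ℝ → X} (hc : IsGeodesicSeg c x y)
    (hc' : IsGeodesicSeg c' x y) : EqOn c c' (Icc 0 (dist x y)) := by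
  intro s hs
  rcases (dist_nonneg (x := x) (y := y)).eq_or_lt with hd | hd
  · obtain rfl : s = 0 := le_antisymm (hd ▸ hs.2) hs.1
    rw [hc.1, hc'.1]
  · have h := hX.dist_geodesicSeg_mul_le hc hc' (div_nonneg hs.1 hd.le)
      ((div_le_one hd).2 hs.2)
    rwa [div_mul_cancel₀ _ hd.ne', dist_self, mul_zero, dist_le_zero] at h

end IsCAT0

def IsGeodesicallyConvex (C : Set X) : Prop :=
  ∀ ⦃a⦄, a ∈ C → ∀ ⦃b⦄, b ∈ C → ∀ ⦃c : ℝ → X⦄, IsGeodesicSeg c a b →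
    MapsTo c (Icc 0 (dist a b)) C

lemma IsCAT0.isGeodesicallyConvex_setOf_eq (hY : IsCAT0 Y) {f g : X → Y} (hf : Isometry f)
    (hg : Isometry g) : IsGeodesicallyConvex {z | f z = g z} := by
  intro a (ha : f a = g a) b (hb : f b = g b) c hc s hs
  have hfc := hc.comp_isometry hf
  have hgc := hc.comp_isometry hg
  rw [← ha, ← hb] at hgc
  exact hY.geodesicSeg_unique hfc hgc (by rwa [hf.dist_eq])

end Geodesics

section Packing

variable {X : Type*} [MetricSpace X]

lemma IsCAT0.exists_radial_expansion (hX : IsCAT0 X) (hGC : GeodesicallyComplete X) (z : X)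
    {k : ℝ} (hk : 1 ≤ k) :
    ∃ e : X → X, (∀ w, dist z (e w) = k * dist z w) ∧ ∀ w v, k * dist w v ≤ dist (e w) (e v) := by
  choose l hl hl₀ hl₁ using hGC.exists_isometry hX.1 z
  have hk₀ : 0 < k := by linarith
  have hseg (w : X) : IsGeodesicSeg (l w) z (l w (k * dist z w)) :=
    hl₀ w ▸ (hl w).isGeodesicSeg (by positivity)
  have hdist (w : X) : dist z (l w (k * dist z w)) = k * dist z w := by
    rw [← hl₀ w, (hl w).dist_eq, Real.dist_eq, zero_sub, abs_neg, abs_of_nonneg (by positivity)]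
  refine ⟨fun w ↦ l w (k * dist z w), hdist, fun w v ↦ ?_⟩
  have h := hX.dist_geodesicSeg_mul_le (hseg w) (hseg v) (inv_nonneg.2 hk₀.le)
    (inv_le_one_of_one_le₀ hk)
  rw [hdist, hdist, inv_mul_cancel_left₀ hk₀.ne', inv_mul_cancel_left₀ hk₀.ne', hl₁, hl₁] at h
  exact (le_inv_mul_iff₀ hk₀).1 h

lemma IsPacked.of_le {P₀ r₀ ρ : ℝ} (hP : IsPacked P₀ r₀ X) (hX : IsCAT0 X)
    (hGC : GeodesicallyComplete X) (hρ : 0 < ρ) (hρr : ρ ≤ r₀) : IsPacked P₀ ρ X := by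
  classical
  intro z s hs hsep
  set k := r₀ / ρ
  have hkρ : k * ρ = r₀ := div_mul_cancel₀ _ hρ.ne'
  obtain ⟨e, he_dist, he_exp⟩ := hX.exists_radial_expansion hGC z ((one_le_div hρ).2 hρr)
  have hk₀ : 0 < k := div_pos (hρ.trans_le hρr) hρ
  have hsep' : ∀ w ∈ s, ∀ v ∈ s, w ≠ v → 2 * r₀ < dist (e w) (e v) := fun w hw v hv hwv ↦
    calc 2 * r₀ = k * (2 * ρ) := by rw [← hkρ]; ring
      _ < k * dist w v := mul_lt_mul_of_pos_left (hsep w hw v hv hwv) hk₀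
      _ ≤ dist (e w) (e v) := he_exp w v
  have hinj : InjOn e s := fun w hw v hv hwv ↦ by
    by_contra hne
    have := hsep' w hw v hv hne
    rw [hwv, dist_self] at this
    linarith
  rw [← Finset.card_image_of_injOn hinj]
  refine hP z _ (fun p hp ↦ ?_) ?_
  · obtain ⟨w, hw, rfl⟩ := Finset.mem_image.1 hp
    have hw : dist z w ≤ 3 * ρ := by simpa [dist_comm] using hs hw
    rw [mem_closedBall, dist_comm, he_dist]
    calc k * dist z w ≤ k * (3 * ρ) := by gcongr
      _ = 3 * r₀ := by rw [← hkρ]; ring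
  · simp only [Finset.mem_image]
    rintro _ ⟨w, hw, rfl⟩ _ ⟨v, hv, rfl⟩ hne
    exact hsep' w hw v hv (ne_of_apply_ne e hne)

end Packing

section Covering

variable {X : Type*} [MetricSpace X]

lemma Metric.isSeparated_iff_pairwise_dist {ε : ℝ≥0} {s : Set X} :
    IsSeparated ε s ↔ s.Pairwise (fun a b ↦ (ε : ℝ) < dist a b) := by
  simp only [IsSeparated, edist_nndist, ENNReal.coe_lt_coe, ← NNReal.coe_lt_coe, coe_nndist]

lemma Metric.isCover_iff_forall_exists_dist_le {ε : ℝ≥0} {s N : Set X} :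
    IsCover ε s N ↔ ∀ x ∈ s, ∃ y ∈ N, dist x y ≤ ε := by
  simp [isCover_iff_subset_iUnion_closedBall, subset_def]

lemma Metric.IsSeparated.encard_le_of_isCover {ε : ℝ≥0} {A C N : Set X}
    (hC : IsSeparated (2 * ε) C) (hCA : C ⊆ A) (hN : IsCover ε A N) : C.encard ≤ N.encard :=
  (hC.encard_le_packingNumber hCA).trans <|
    (packingNumber_two_mul_le_externalCoveringNumber ε A).trans hN.externalCoveringNumber_le_encard

lemma IsGeodesicSpace.exists_dist_le_dist_le (hX : IsGeodesicSpace X) {y w : X} {r s : ℝ}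
    (hr : 0 ≤ r) (hs : 0 ≤ s) (h : dist y w ≤ r + s) : ∃ z, dist y z ≤ r ∧ dist z w ≤ s := by
  by_cases hyw : dist y w ≤ r
  · exact ⟨w, hyw, by simpa using hs⟩
  obtain ⟨c, hc₀, hc₁, hc⟩ := hX y w
  have hr' : r ∈ Icc 0 (dist y w) := ⟨hr, (not_le.1 hyw).le⟩
  refine ⟨c r, ?_, ?_⟩
  · rw [← hc₀, hc 0 ⟨le_rfl, dist_nonneg⟩ r hr', zero_sub, abs_neg, abs_of_nonneg hr]
  · rw [← hc₁, hc r hr' _ ⟨dist_nonneg, le_rfl⟩, abs_sub_comm, abs_of_nonneg (by linarith)]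
    linarith

variable {P₀ : ℝ} {ρ : ℝ≥0}

lemma IsPacked.packingNumber_le (hP : IsPacked P₀ ρ X) (c : X) :
    packingNumber (2 * ρ) (closedBall c (3 * ρ)) ≤ ⌊P₀⌋₊ := by
  refine iSup₂_le fun C hC ↦ iSup_le fun hsep ↦ ?_
  by_contra! hlt
  obtain ⟨t, htC, htcard⟩ := Set.exists_subset_encard_eq (Order.add_one_le_of_lt hlt)
  have htfin : t.Finite := Set.finite_of_encard_eq_coe htcard
  have hcard : htfin.toFinset.card = ⌊P₀⌋₊ + 1 := by
    rw [htfin.encard_eq_coe_toFinset_card] at htcard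
    exact_mod_cast htcard
  have hsep' := isSeparated_iff_pairwise_dist.1 (hsep.subset htC)
  have := hP c htfin.toFinset (by simpa using htC.trans hC) fun a ha b hb hab ↦ by
    simpa using hsep' (htfin.mem_toFinset.1 ha) (htfin.mem_toFinset.1 hb) hab
  rw [hcard, Nat.cast_add_one] at this
  exact (Nat.lt_floor_add_one P₀).not_ge this

lemma IsPacked.exists_finset_isCover (hP : IsPacked P₀ ρ X) (c : X) :
    ∃ N : Finset X, N.card ≤ ⌊P₀⌋₊ ∧ IsCover (2 * ρ) (closedBall c (3 * ρ)) N := by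
  have hle := hP.packingNumber_le c
  have hne := ne_top_of_le_ne_top (ENat.natCast_ne_top _) hle
  have hcard := (encard_maximalSeparatedSet hne).trans_le hle
  have hfin := Set.finite_of_encard_le_coe hcard
  refine ⟨hfin.toFinset, ?_, by simpa using isCover_maximalSeparatedSet hne⟩
  rw [hfin.encard_eq_coe_toFinset_card] at hcard
  exact_mod_cast hcard

/-- `B̄(y, (n+1)ρ)` lies in the `3ρ`-balls around a `2ρ`-cover of `B̄(y, nρ)`, and packing covers
each of those by `⌊P₀⌋` balls of radius `2ρ`. -/
lemma IsPacked.exists_finset_isCover_closedBall (hP : IsPacked P₀ ρ X) (hX : IsGeodesicSpace X)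
    (y : X) (n : ℕ) :
    ∃ N : Finset X, N.card ≤ ⌊P₀⌋₊ ^ n ∧ IsCover (2 * ρ) (closedBall y (n * ρ)) N := by
  classical
  induction n with
  | zero =>
    refine ⟨{y}, by simp, isCover_iff_forall_exists_dist_le.2 fun w hw ↦ ⟨y, by simp, ?_⟩⟩
    simp_all
  | succ n ih =>
    obtain ⟨N, hNcard, hN⟩ := ih
    choose M hMcard hM using hP.exists_finset_isCover
    refine ⟨N.biUnion M, ?_, isCover_iff_forall_exists_dist_le.2 fun w hw ↦ ?_⟩
    · calc (N.biUnion M).card ≤ N.card * ⌊P₀⌋₊ :=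
            Finset.card_biUnion_le_card_mul _ _ _ fun a _ ↦ hMcard a
        _ ≤ ⌊P₀⌋₊ ^ (n + 1) := by rw [pow_succ]; gcongr
    rw [mem_closedBall, dist_comm] at hw
    obtain ⟨z, hz, hzw⟩ := hX.exists_dist_le_dist_le (r := n * ρ) (s := ρ) (by positivity)
      ρ.coe_nonneg (by push_cast at hw; linarith)
    obtain ⟨a, ha, haz⟩ := isCover_iff_forall_exists_dist_le.1 hN z
      (by rwa [mem_closedBall, dist_comm])
    have hwa : w ∈ closedBall a (3 * ρ) := by
      rw [mem_closedBall]
      push_cast at haz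
      linarith [dist_triangle w z a, dist_comm z w]
    obtain ⟨b, hb, hwb⟩ := isCover_iff_forall_exists_dist_le.1 (hM a) w hwa
    exact ⟨b, by simpa using ⟨a, ha, hb⟩, hwb⟩

lemma IsPacked.encard_le_of_isSeparated (hP : IsPacked P₀ ρ X) (hX : IsGeodesicSpace X)
    {C : Set X} (hC : IsSeparated (4 * ρ) C) {y : X} {n : ℕ} (hCy : C ⊆ closedBall y (n * ρ)) :
    C.encard ≤ ⌊P₀⌋₊ ^ n := by
  obtain ⟨N, hNcard, hN⟩ := hP.exists_finset_isCover_closedBall hX y n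
  have hC' : IsSeparated (2 * (2 * ρ)) C := by rwa [← mul_assoc, two_mul, two_add_two_eq_four]
  calc C.encard ≤ (N : Set X).encard := hC'.encard_le_of_isCover hCy hN
    _ ≤ ⌊P₀⌋₊ ^ n := by rw [Set.encard_coe_eq_coe_finsetCard]; exact_mod_cast hNcard

end Covering

section Rigidity

variable {X : Type*} [MetricSpace X] {C : Set X}

lemma IsGeodesicallyConvex.infDist_le (hC : IsGeodesicallyConvex C) (hX : IsCAT0 X)
    {l : ℝ → X} (hl : Isometry l) (hl₀ : l 0 ∈ C) {q : X} (hq : q ∈ C) {s T : ℝ} (hs : 0 ≤ s)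
    (hsT : s ≤ T) (hT : 0 < T) : infDist (l s) C ≤ s / T * dist (l T) q := by
  obtain ⟨c, hc⟩ := hX.1 (l 0) q
  have hdist : dist (l 0) (l T) = T := by
    rw [hl.dist_eq, Real.dist_eq, zero_sub, abs_neg, abs_of_pos hT]
  have ht₀ : 0 ≤ s / T := div_nonneg hs hT.le
  have ht₁ : s / T ≤ 1 := (div_le_one hT).2 hsT
  have h := hX.dist_geodesicSeg_mul_le (hl.isGeodesicSeg hT.le) hc ht₀ ht₁
  rw [hdist, div_mul_cancel₀ _ hT.ne'] at h
  exact (infDist_le_dist_of_mem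
    (hC hl₀ hq hc ⟨mul_nonneg ht₀ dist_nonneg, mul_le_of_le_one_left dist_nonneg ht₁⟩)).trans h

/-- Extend the geodesic `[p, z]` by `2D` beyond `z` and take `q ∈ C` within `D` of the new
endpoint; by the CAT(0) contraction towards `p`, the geodesic `[p, q] ⊆ C` passes within
`d D / (d + 2D) ≤ d / 2` of `z`, where `d = dist p z`. -/
lemma IsGeodesicallyConvex.two_mul_infDist_le (hC : IsGeodesicallyConvex C) (hX : IsCAT0 X)
    (hGC : GeodesicallyComplete X) {y : X} {R D : ℝ} (hD : 0 ≤ D)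
    (hdense : ∀ w, dist y w ≤ R + 2 * D → ∃ p ∈ C, dist w p ≤ D) {z : X} (hz : dist y z ≤ R)
    {p : X} (hp : p ∈ C) : 2 * infDist z C ≤ dist z p := by
  rcases (dist_nonneg (x := p) (y := z)).eq_or_lt with hd | hd
  · rw [← dist_eq_zero.1 hd.symm, infDist_zero_of_mem hp]
    simp
  obtain ⟨l, hl, hl₀, hl₁⟩ := hGC.exists_isometry hX.1 p z
  set d := dist p z
  have hw : dist y (l (d + 2 * D)) ≤ R + 2 * D := by
    calc dist y (l (d + 2 * D)) ≤ dist y z + dist z (l (d + 2 * D)) := dist_triangle _ _ _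
      _ = dist y z + 2 * D := by
        rw [← hl₁, hl.dist_eq, Real.dist_eq, sub_add_cancel_left, abs_neg,
          abs_of_nonneg (by positivity)]
      _ ≤ R + 2 * D := by linarith
  obtain ⟨q, hq, hwq⟩ := hdense _ hw
  have h := hC.infDist_le hX hl (hl₀ ▸ hp) hq (T := d + 2 * D) hd.le (by linarith)
    (by positivity)
  rw [hl₁] at h
  calc 2 * infDist z C ≤ 2 * (d / (d + 2 * D) * D) := by
        gcongr
        exact h.trans (mul_le_mul_of_nonneg_left hwq (by positivity))
    _ ≤ d := by
        rw [div_mul_eq_mul_div, mul_div_assoc', div_le_iff₀ (by positivity)]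
        nlinarith
    _ = dist z p := dist_comm _ _

lemma IsGeodesicallyConvex.closedBall_subset (hC : IsGeodesicallyConvex C) (hCc : IsClosed C)
    (hX : IsCAT0 X) (hGC : GeodesicallyComplete X) {y : X} {R D : ℝ} (hD : 0 ≤ D)
    (hdense : ∀ w, dist y w ≤ R + 2 * D → ∃ p ∈ C, dist w p ≤ D) : closedBall y R ⊆ C := by
  intro z hz
  rw [mem_closedBall, dist_comm] at hz
  obtain ⟨p, hp, -⟩ := hdense z (by linarith)
  have h : 2 * infDist z C ≤ infDist z C :=
    (le_infDist ⟨p, hp⟩).2 fun _ hq ↦ hC.two_mul_infDist_le hX hGC hD hdense hz hq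
  rw [hCc.mem_iff_infDist_zero ⟨p, hp⟩]
  linarith [infDist_nonneg (x := z) (s := C)]

end Rigidity

lemma exists_finset_eqOn_of_mapsTo {ι α : Type*} [FunLike ι α α] {S : Set ι} {F : Set α}
    (hF : F.Finite) (hS : ∀ g ∈ S, MapsTo g F F) :
    ∃ T : Finset ι, T.card ≤ F.ncard ^ F.ncard ∧ ∀ g ∈ S, ∃ h ∈ T, EqOn g h F := by
  classical
  have := hF.to_subtype
  let φ : S → (F → F) := fun g ↦ (hS g g.2).restrict
  obtain ⟨S', -, hbij⟩ := exists_subset_bijOn (univ : Set S) φ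
  have hfin : S'.Finite := .of_finite_image (Set.toFinite _) hbij.injOn
  refine ⟨hfin.toFinset.image Subtype.val, ?_, fun g hg ↦ ?_⟩
  · calc _ ≤ hfin.toFinset.card := Finset.card_image_le
      _ = (φ '' S').ncard := by rw [hbij.injOn.ncard_image, ncard_eq_toFinset_card _ hfin]
      _ ≤ Nat.card (F → F) := ncard_le_card _
      _ = F.ncard ^ F.ncard := by rw [Nat.card_fun, Nat.card_coe_set_eq]
  · obtain ⟨h, hh, hφ⟩ : φ ⟨g, hg⟩ ∈ φ '' S' := hbij.image_eq ▸ mem_image_of_mem φ (mem_univ _)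
    exact ⟨h, Finset.mem_image_of_mem _ (hfin.mem_toFinset.2 hh),
      fun p hp ↦ (congrArg Subtype.val (congrFun hφ ⟨p, hp⟩)).symm⟩

section Orbits

variable {X : Type*} [MetricSpace X] {G : Subgroup (X ≃ᵢ X)} {x : X}

lemma isSeparated_orbit_of_displacement_gap {σ : ℝ}
    (hgap : ∀ g ∈ G, dist x (g x) = 0 ∨ σ ≤ dist x (g x)) {ε : ℝ≥0} (hε : ε < σ) :
    IsSeparated ε ((fun g : X ≃ᵢ X ↦ g x) '' G) := by
  refine isSeparated_iff_pairwise_dist.2 ?_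
  rintro _ ⟨g, hg, rfl⟩ _ ⟨h, hh, rfl⟩ hne
  have hdist : dist x ((g⁻¹ * h) x) = dist (g x) (h x) := by
    rw [IsometryEquiv.mul_apply, ← g.dist_eq, IsometryEquiv.apply_inv_self]
  rcases hgap _ (mul_mem (inv_mem hg) hh) with h₀ | hσ
  · exact absurd (dist_eq_zero.1 (hdist ▸ h₀)) hne
  · linarith

lemma mapsTo_orbit_inter_closedBall {g : X ≃ᵢ X} (hg : g ∈ G) {y : X} (hgy : g y = y) (r : ℝ) :
    MapsTo g ((fun k : X ≃ᵢ X ↦ k x) '' G ∩ closedBall y r)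
      ((fun k : X ≃ᵢ X ↦ k x) '' G ∩ closedBall y r) := by
  rintro _ ⟨⟨k, hk, rfl⟩, hky⟩
  exact ⟨⟨g * k, mul_mem hg hk, rfl⟩, by rwa [mem_closedBall, ← hgy, g.dist_eq]⟩

lemma IsCAT0.eqOn_closedBall_of_eqOn_orbit (hX : IsCAT0 X) (hGC : GeodesicallyComplete X)
    {D : ℝ} (hG : IsDCocompact G D) {y : X} {R : ℝ} {g h : X ≃ᵢ X}
    (hgh : EqOn g h ((fun k : X ≃ᵢ X ↦ k x) '' G ∩ closedBall y (R + 3 * D))) :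
    EqOn g h (closedBall y R) := by
  have hD : 0 ≤ D := let ⟨_, _, hk⟩ := hG x x; dist_nonneg.trans hk
  refine (hX.isGeodesicallyConvex_setOf_eq g.isometry h.isometry).closedBall_subset
    (isClosed_eq g.continuous h.continuous) hX hGC hD fun w hw ↦ ?_
  obtain ⟨k, hk, hkw⟩ := hG w x
  refine ⟨k x, hgh ⟨⟨k, hk, rfl⟩, ?_⟩, hkw⟩
  rw [mem_closedBall, dist_comm]
  linarith [dist_triangle y w (k x)]

end Orbits

theorem stabilizer_restriction_bound_sigma_controlled_general
    (P₀ r₀ D₀ σ R : ℝ) (hr₀ : 0 < r₀) (hσ : 0 < σ) :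
    ∃ N₀ : ℕ, 0 < N₀ ∧
      ∀ (X : Type*) [MetricSpace X] (x : X) (G : Subgroup (X ≃ᵢ X)),
        SigmaControlled P₀ r₀ D₀ σ X x G →
        ∀ y : X, ∃ T : Finset (X ≃ᵢ X), T.card ≤ N₀ ∧
          ∀ g : X ≃ᵢ X, g ∈ G → g y = y →
            ∃ h ∈ T, ∀ z ∈ Metric.closedBall y R, g z = h z := by
  obtain ⟨ρ, hρ₀, hρr, hρσ⟩ : ∃ ρ : ℝ≥0, 0 < ρ ∧ (ρ : ℝ) ≤ r₀ ∧ 4 * (ρ : ℝ) < σ :=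
    ⟨(min (σ / 5) r₀).toNNReal, by simp [hσ, hr₀], by simp [hr₀.le],
      by rw [Real.coe_toNNReal _ (by positivity)]; linarith [min_le_left (σ / 5) r₀]⟩
  set m := ⌈(R + 3 * D₀) / ρ⌉₊
  set M := ⌊P₀⌋₊ ^ m
  refine ⟨(M + 1) ^ M, by positivity, fun X _ x G hG y ↦ ?_⟩
  obtain ⟨-, hGC, hX, hP, -, -, hcoc, hgap⟩ := hG
  set F := (fun g : X ≃ᵢ X ↦ g x) '' G ∩ closedBall y (R + 3 * D₀)
  have hRm : R + 3 * D₀ ≤ m * ρ := (div_le_iff₀ (NNReal.coe_pos.2 hρ₀)).1 (Nat.le_ceil _)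
  have hF : F.encard ≤ M := (hP.of_le hX hGC hρ₀ hρr).encard_le_of_isSeparated hX.1
    ((isSeparated_orbit_of_displacement_gap hgap (by exact_mod_cast hρσ)).subset
      inter_subset_left) (inter_subset_right.trans (closedBall_subset_closedBall hRm))
  obtain ⟨hFfin, hFcard⟩ := Set.encard_le_coe_iff_finite_ncard_le.1 hF
  obtain ⟨T, hTcard, hT⟩ := exists_finset_eqOn_of_mapsTo hFfin (S := {g | g ∈ G ∧ g y = y})
    fun g hg ↦ mapsTo_orbit_inter_closedBall hg.1 hg.2 _
  refine ⟨T, hTcard.trans ?_, fun g hg hgy ↦ ?_⟩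
  · calc F.ncard ^ F.ncard ≤ (M + 1) ^ F.ncard := by gcongr; omega
      _ ≤ (M + 1) ^ M := pow_le_pow_right₀ (by omega) hFcard
  obtain ⟨h, hhT, hgh⟩ := hT g ⟨hg, hgy⟩
  exact ⟨h, hhT, hX.eqOn_closedBall_of_eqOn_orbit hGC hcoc hgh⟩

/-- Uniform bound on the cardinality of the image of the restriction map
`Stab_G(y) → Isom(B̄(y,R))` for `σ`-controlled actions: there are at most `N₀` isometries
of `G` fixing `y`, up to agreement on the ball `B̄(y,R)`. -/
theorem stabilizer_restriction_bound_sigma_controlled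
    (P₀ r₀ D₀ σ R : ℝ) (hP₀ : 0 < P₀) (hr₀ : 0 < r₀) (hD₀ : 0 < D₀) (hσ : 0 < σ)
    (hR : 0 < R) :
    ∃ N₀ : ℕ, 0 < N₀ ∧
      ∀ (X : Type*) [MetricSpace X] (x : X) (G : Subgroup (X ≃ᵢ X)),
        SigmaControlled P₀ r₀ D₀ σ X x G →
        ∀ y : X, ∃ T : Finset (X ≃ᵢ X), T.card ≤ N₀ ∧
          ∀ g : X ≃ᵢ X, g ∈ G → g y = y →
            ∃ h ∈ T, ∀ z ∈ Metric.closedBall y R, g z = h z :=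
  stabilizer_restriction_bound_sigma_controlled_general P₀ r₀ D₀ σ R hr₀ hσ
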